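/- arXiv:1406.3748 — 4 statements merged into one kernel-verified Lean document; each statement's English description precedes it below -/
import Mathlib

section
/- Fix m ≥ 1 and κ ∈ [0,1). For p ∈ (0,1), define Q_p(z) = (((1-p)+(p-κ)z^m)/((1-pκ)-κ(1-p)z^m))^{1/m}. Then the family {Q_p} is a commutative semigroup under composition: for all p, p' ∈ (0,1), Q_p ∘ Q_{p'} = Q_{p'} ∘ Q_p, and moreover Q_p ∘ Q_{p'} = Q_{p''} for some p'' ∈ (0,1). -/
open Real

/-- The normalizing family of Example 1. -/
noncomputable def Qfam (m : ℕ) (κ p z : ℝ) : ℝ :=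
  (((1 - p) + (p - κ) * z ^ m) / ((1 - p * κ) - κ * (1 - p) * z ^ m)) ^ ((m : ℝ)⁻¹)

/-!
`Qfam m κ p` is `w ↦ w ^ (1/m)` after the Möbius map `Qmob κ p` after `z ↦ z ^ m`, so it suffices
to show `Qmob κ p ∘ Qmob κ q = Qmob κ (p * q)`. The map `Qmob κ p` fixes `1` and `1/κ`, with
multiplier `p` at `1`: it is conjugate to `w ↦ p * w` through `w ↦ (1 - w) / (1 - κ * w)`.
Hence the family is a copy of the multiplicative semigroup `(0, 1)`, with `p'' = p * p'`.
-/

noncomputable def Qmob (κ p w : ℝ) : ℝ :=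
  ((1 - p) + (p - κ) * w) / ((1 - p * κ) - κ * (1 - p) * w)

section Qmob

variable {κ p q w : ℝ}

lemma Qmob_denom_pos (hκ0 : 0 ≤ κ) (hκ1 : κ < 1) (hp : p ≤ 1) (hw : w ≤ 1) :
    0 < (1 - p * κ) - κ * (1 - p) * w := by
  nlinarith [mul_nonneg (mul_nonneg hκ0 (sub_nonneg.2 hp)) (sub_nonneg.2 hw)]

lemma Qmob_nonneg (hκ0 : 0 ≤ κ) (hκ1 : κ ≤ 1) (hp : p ≤ 1) (hw0 : 0 ≤ w) (hw1 : w ≤ 1) :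
    0 ≤ Qmob κ p w :=
  div_nonneg
    (by nlinarith [mul_nonneg (sub_nonneg.2 hp) (sub_nonneg.2 hw1), mul_nonneg (sub_nonneg.2 hκ1) hw0])
    (by nlinarith [mul_nonneg (mul_nonneg hκ0 (sub_nonneg.2 hp)) (sub_nonneg.2 hw1)])

lemma Qmob_comp (hκ : κ ≠ 1) (hD : (1 - q * κ) - κ * (1 - q) * w ≠ 0) :
    Qmob κ p (Qmob κ q w) = Qmob κ (p * q) w := by
  have hκ' : 1 - κ ≠ 0 := sub_ne_zero.2 hκ.symm
  set D := (1 - q * κ) - κ * (1 - q) * w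
  have hnum : (1 - p) + (p - κ) * (((1 - q) + (q - κ) * w) / D)
      = (1 - κ) * ((1 - p * q) + (p * q - κ) * w) / D := by
    field_simp; ring
  have hden : (1 - p * κ) - κ * (1 - p) * (((1 - q) + (q - κ) * w) / D)
      = (1 - κ) * ((1 - p * q * κ) - κ * (1 - p * q) * w) / D := by
    field_simp; ring
  rw [Qmob, Qmob, hnum, hden, div_div_div_cancel_right₀ hD, mul_div_mul_left _ _ hκ', Qmob]

end Qmob

lemma Qfam_eq (m : ℕ) (κ p z : ℝ) : Qfam m κ p z = Qmob κ p (z ^ m) ^ ((m : ℝ)⁻¹) := rfl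

lemma Qfam_comp {m : ℕ} (hm : m ≠ 0) {κ p q z : ℝ} (hκ0 : 0 ≤ κ) (hκ1 : κ < 1) (hq : q ≤ 1)
    (hz : z ∈ Set.Icc (0 : ℝ) 1) :
    Qfam m κ p (Qfam m κ q z) = Qfam m κ (p * q) z := by
  have hw0 : 0 ≤ z ^ m := pow_nonneg hz.1 m
  have hw1 : z ^ m ≤ 1 := pow_le_one₀ hz.1 hz.2
  rw [Qfam_eq m κ q, Qfam_eq, rpow_inv_natCast_pow (Qmob_nonneg hκ0 hκ1.le hq hw0 hw1) hm,
    Qmob_comp hκ1.ne (Qmob_denom_pos hκ0 hκ1 hq hw1).ne', Qfam_eq]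

theorem Qfam_commutative_semigroup_general (m : ℕ) (hm : 1 ≤ m) (κ : ℝ)
    (hκ : κ ∈ Set.Ico (0 : ℝ) 1) (p p' : ℝ)
    (hp : p ∈ Set.Ioo (0 : ℝ) 1) (hp' : p' ∈ Set.Ioo (0 : ℝ) 1) :
    (∀ z ∈ Set.Icc (0 : ℝ) 1, Qfam m κ p (Qfam m κ p' z) = Qfam m κ p' (Qfam m κ p z)) ∧
    (∃ p'' ∈ Set.Ioo (0 : ℝ) 1,
      ∀ z ∈ Set.Icc (0 : ℝ) 1, Qfam m κ p (Qfam m κ p' z) = Qfam m κ p'' z) := by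
  obtain ⟨hκ0, hκ1⟩ := hκ
  have hm0 : m ≠ 0 := Nat.one_le_iff_ne_zero.1 hm
  have hpp' : p * p' ∈ Set.Ioo (0 : ℝ) 1 :=
    ⟨mul_pos hp.1 hp'.1, mul_lt_one_of_nonneg_of_lt_one_left hp.1.le hp.2 hp'.2.le⟩
  refine ⟨fun z hz => ?_, p * p', hpp', fun z hz => Qfam_comp hm0 hκ0 hκ1 hp'.2.le hz⟩
  rw [Qfam_comp hm0 hκ0 hκ1 hp'.2.le hz, Qfam_comp hm0 hκ0 hκ1 hp.2.le hz, mul_comm]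

theorem Qfam_commutative_semigroup (m : ℕ) (hm : 1 ≤ m) (κ : ℝ)
    (hκ : κ ∈ Set.Ico (0 : ℝ) 1) (p p' : ℝ)
    (hp : p ∈ Set.Ioo (0 : ℝ) 1) (hp' : p' ∈ Set.Ioo (0 : ℝ) 1)
    (hmgt : 1 < m → p < κ ∧ p' < κ) :
    (∀ z ∈ Set.Icc (0 : ℝ) 1, Qfam m κ p (Qfam m κ p' z) = Qfam m κ p' (Qfam m κ p z)) ∧
    (∃ p'' ∈ Set.Ioo (0 : ℝ) 1,
      ∀ z ∈ Set.Icc (0 : ℝ) 1, Qfam m κ p (Qfam m κ p' z) = Qfam m κ p'' z) :=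
  Qfam_commutative_semigroup_general m hm κ hκ p p' hp hp'
end

section
/- For λ > 0 and α ∈ (0,1], the function P(z) = exp(-λ(1-z)^α) is absolutely monotone appropriately, i.e., its power series expansion about z = 0 has nonnegative coefficients summing to 1, so P is a probability generating function. -/
/-!
With `G z = 1 - (1 - z) ^ α` we have `P z = exp (-λ) * exp (λ * G z)`. By the binomial series, `G`
has the coefficients `(-1) ^ (k + 1) * choose α k` for `k ≥ 1`, which are nonnegative for
`0 < α ≤ 1` because every factor `α - j` with `j ≥ 1` of `choose α k` is nonpositive; at `z = 1`
the series still converges to `G 1 = 1` by monotone convergence. Power series with nonnegative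
coefficients are closed under products, hence under powers, and hence under `exp f = ∑ fⁿ / n!`.
-/

open Real Filter Topology Finset

theorem Ring.succ_mul_choose_succ {R : Type*} [Field R] [CharZero R] (a : R) (k : ℕ) :
    ((k : R) + 1) * Ring.choose a (k + 1) = Ring.choose a k * (a - k) := by
  have h := Ring.descPochhammer_eq_factorial_smul_choose a (k + 1)
  rw [descPochhammer_succ_right, Polynomial.smeval_mul,
    Ring.descPochhammer_eq_factorial_smul_choose] at h
  simp only [Polynomial.smeval_sub, Polynomial.smeval_X, Polynomial.smeval_natCast, nsmul_eq_mul,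
    Nat.factorial_succ, Nat.cast_mul, pow_one, pow_zero] at h
  push_cast at h
  apply mul_left_cancel₀ (Nat.cast_ne_zero.2 k.factorial_ne_zero : (k.factorial : R) ≠ 0)
  linear_combination -h

theorem Real.hasSum_choose_mul_pow (a : ℝ) {x : ℝ} (hx : |x| < 1) :
    HasSum (fun n => Ring.choose a n * x ^ n) ((1 + x) ^ a) := by
  have hx' : x ∈ Metric.eball (0 : ℝ) 1 := by
    rw [← ENNReal.ofReal_one, Metric.eball_ofReal]
    simpa using hx
  simpa [binomialSeries, FormalMultilinearSeries.ofScalars_apply_eq, mul_comm] using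
    Real.one_add_rpow_hasFPowerSeriesOnBall_zero.hasSum hx'

theorem hasSum_of_nonneg_of_tendsto_powerSeries {a : ℕ → ℝ} {f : ℝ → ℝ} {l : ℝ}
    (ha : ∀ n, 0 ≤ a n) (hf : ∀ z ∈ Set.Ico (0 : ℝ) 1, HasSum (fun n => a n * z ^ n) (f z))
    (hl : Tendsto f (𝓝[<] 1) (𝓝 l)) : HasSum a l := by
  have hev : ∀ᶠ z in 𝓝[<] (1 : ℝ), z ∈ Set.Ico 0 1 := Ico_mem_nhdsLT zero_lt_one
  have hpartial : ∀ N, ∑ n ∈ range N, a n ≤ l := fun N => by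
    have hcont : Continuous fun z : ℝ => ∑ n ∈ range N, a n * z ^ n := by fun_prop
    have hlim := (hcont.tendsto' 1 (∑ n ∈ range N, a n) (by simp)).mono_left
      (nhdsWithin_le_nhds (s := Set.Iio 1))
    refine le_of_tendsto_of_tendsto hlim hl (hev.mono fun z hz => ?_)
    exact sum_le_hasSum _ (fun n _ => mul_nonneg (ha n) (pow_nonneg hz.1 n)) (hf z hz)
  have hsum : Summable a := summable_of_sum_range_le ha hpartial
  refine hsum.hasSum_iff.2 (le_antisymm (tsum_le_of_sum_range_le ha hpartial) ?_)
  refine le_of_tendsto hl (hev.mono fun z hz => hasSum_le (fun n => ?_) (hf z hz) hsum.hasSum)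
  exact mul_le_of_le_one_right (ha n) (pow_le_one₀ hz.1 hz.2.le)

theorem hasSum_tsum_swap_of_nonneg {β γ : Type*} {F : β × γ → ℝ} (hF : 0 ≤ F) {r : β → ℝ}
    {s : ℝ} (hrow : ∀ b, HasSum (fun c => F (b, c)) (r b)) (hr : HasSum r s) :
    HasSum (fun c => ∑' b, F (b, c)) s := by
  have hsum : Summable F := (summable_prod_of_nonneg hF).2
    ⟨fun b => (hrow b).summable, by simpa only [(hrow _).tsum_eq] using hr.summable⟩
  have hFs : HasSum F s := (hsum.hasSum.prod_fiberwise hrow).unique hr ▸ hsum.hasSum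
  exact ((Equiv.prodComm γ β).hasSum_iff.2 hFs).prod_fiberwise
    fun c => (hsum.prod_symm.prod_factor c).hasSum

def HasNonnegPowerSeries (f : ℝ → ℝ) : Prop :=
  ∃ c : ℕ → ℝ, (∀ k, 0 ≤ c k) ∧ ∀ z ∈ Set.Icc (0 : ℝ) 1, HasSum (fun k => c k * z ^ k) (f z)

namespace HasNonnegPowerSeries

variable {f g : ℝ → ℝ}

theorem const {a : ℝ} (ha : 0 ≤ a) : HasNonnegPowerSeries fun _ => a := by
  refine ⟨fun k => if k = 0 then a else 0, fun k => by by_cases hk : k = 0 <;> simp [hk, ha],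
    fun z _ => ?_⟩
  convert hasSum_ite_eq 0 a using 1
  ext k
  split_ifs with hk <;> simp [hk]

theorem mul (hf : HasNonnegPowerSeries f) (hg : HasNonnegPowerSeries g) :
    HasNonnegPowerSeries fun z => f z * g z := by
  obtain ⟨c, hc, hfc⟩ := hf
  obtain ⟨d, hd, hgd⟩ := hg
  refine ⟨fun k => ∑ ij ∈ antidiagonal k, c ij.1 * d ij.2,
    fun k => sum_nonneg fun ij _ => mul_nonneg (hc _) (hd _), fun z hz => ?_⟩
  have hf := hfc z hz
  have hg := hgd z hz
  have hprod := hf.summable.mul_of_nonneg hg.summable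
    (fun k => mul_nonneg (hc k) (pow_nonneg hz.1 k)) (fun k => mul_nonneg (hd k) (pow_nonneg hz.1 k))
  have hcauchy := (summable_sum_mul_antidiagonal_of_summable_mul
    (f := fun k => c k * z ^ k) (g := fun k => d k * z ^ k) hprod).hasSum
  rw [← hf.summable.tsum_mul_tsum_eq_tsum_sum_antidiagonal hg.summable hprod, hf.tsum_eq,
    hg.tsum_eq] at hcauchy
  refine hcauchy.congr_fun fun k => ?_
  rw [sum_mul]
  refine sum_congr rfl fun ij hij => ?_
  rw [← mem_antidiagonal.1 hij, pow_add]
  ring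

theorem pow (hf : HasNonnegPowerSeries f) (n : ℕ) : HasNonnegPowerSeries fun z => f z ^ n := by
  induction n with
  | zero => simpa using const zero_le_one
  | succ n ih => simpa only [pow_succ] using ih.mul hf

theorem exp (hf : HasNonnegPowerSeries f) : HasNonnegPowerSeries fun z => Real.exp (f z) := by
  choose c hc hsum using hf.pow
  refine ⟨fun k => ∑' n, c n k / n.factorial,
    fun k => tsum_nonneg fun n => div_nonneg (hc n k) n.factorial.cast_nonneg, fun z hz => ?_⟩
  have hrow : ∀ n, HasSum (fun k => c n k / n.factorial * z ^ k) (f z ^ n / n.factorial) :=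
    fun n => by simpa only [div_mul_eq_mul_div] using (hsum n z hz).div_const _
  have hexp : HasSum (fun n => f z ^ n / n.factorial) (Real.exp (f z)) := by
    simpa only [← exp_eq_exp_ℝ] using NormedSpace.expSeries_div_hasSum_exp (f z)
  have hF : 0 ≤ fun nk : ℕ × ℕ => c nk.1 nk.2 / nk.1.factorial * z ^ nk.2 := fun nk =>
    mul_nonneg (div_nonneg (hc _ _) (Nat.cast_nonneg _)) (pow_nonneg hz.1 _)
  simpa only [tsum_mul_right] using hasSum_tsum_swap_of_nonneg hF hrow hexp

end HasNonnegPowerSeries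

/-- The coefficients of `1 - (1 - z) ^ α`: for `0 < α ≤ 1`, the Sibuya distribution. -/
noncomputable def sibuyaCoeff (α : ℝ) (k : ℕ) : ℝ :=
  (if k = 0 then 1 else 0) - (-1) ^ k * Ring.choose α k

theorem neg_one_pow_mul_choose_succ_nonneg {α : ℝ} (h0 : 0 ≤ α) (h1 : α ≤ 1) (k : ℕ) :
    0 ≤ (-1) ^ k * Ring.choose α (k + 1) := by
  induction k with
  | zero => simpa [Ring.choose_one_right] using h0
  | succ k ih =>
    have hk : (0 : ℝ) < k + 2 := by positivity
    have hrec : Ring.choose α (k + 1 + 1) = Ring.choose α (k + 1) * (α - (k + 1)) / (k + 2) := by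
      rw [eq_div_iff hk.ne']
      have := Ring.succ_mul_choose_succ α (k + 1)
      push_cast at this
      linear_combination this
    have : (-1) ^ (k + 1) * Ring.choose α (k + 1 + 1)
        = (-1) ^ k * Ring.choose α (k + 1) * ((k + 1 - α) / (k + 2)) := by
      rw [hrec]
      ring
    rw [this]
    exact mul_nonneg ih (div_nonneg (by linarith [k.cast_nonneg (α := ℝ)]) hk.le)

theorem sibuyaCoeff_nonneg {α : ℝ} (h0 : 0 ≤ α) (h1 : α ≤ 1) (k : ℕ) : 0 ≤ sibuyaCoeff α k := by
  cases k with
  | zero => simp [sibuyaCoeff]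
  | succ k => simpa [sibuyaCoeff, pow_succ] using neg_one_pow_mul_choose_succ_nonneg h0 h1 k

theorem hasSum_sibuyaCoeff_mul_pow (α : ℝ) {z : ℝ} (hz : |z| < 1) :
    HasSum (fun k => sibuyaCoeff α k * z ^ k) (1 - (1 - z) ^ α) := by
  have hbin := Real.hasSum_choose_mul_pow α (x := -z) (by rwa [abs_neg])
  rw [← sub_eq_add_neg] at hbin
  refine ((hasSum_ite_eq 0 (1 : ℝ)).sub hbin).congr_fun fun k => ?_
  rw [sibuyaCoeff, neg_pow, sub_mul]
  split_ifs with hk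
  · simp [hk]
  · ring

theorem hasNonnegPowerSeries_one_sub_one_sub_rpow {α : ℝ} (h0 : 0 < α) (h1 : α ≤ 1) :
    HasNonnegPowerSeries fun z => 1 - (1 - z) ^ α := by
  have hnonneg := sibuyaCoeff_nonneg h0.le h1
  have hlt : ∀ z ∈ Set.Ico (0 : ℝ) 1, |z| < 1 := fun z hz => abs_lt.2 ⟨by linarith [hz.1], hz.2⟩
  refine ⟨sibuyaCoeff α, hnonneg, fun z hz => ?_⟩
  rcases hz.2.lt_or_eq with hz1 | rfl
  · exact hasSum_sibuyaCoeff_mul_pow α (hlt z ⟨hz.1, hz1⟩)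
  have hcont : Continuous fun z : ℝ => (1 - z) ^ α :=
    (continuous_const.sub continuous_id).rpow_const fun _ => Or.inr h0.le
  have hlim := (hcont.tendsto' 1 0 (by simp [zero_rpow h0.ne'])).mono_left
    (nhdsWithin_le_nhds (s := Set.Iio 1))
  simpa [zero_rpow h0.ne'] using hasSum_of_nonneg_of_tendsto_powerSeries hnonneg
    (fun z hz => hasSum_sibuyaCoeff_mul_pow α (hlt z hz))
    (by simpa using tendsto_const_nhds.sub hlim)

theorem discrete_stable_is_pgf (lam α : ℝ) (hlam : 0 < lam)
    (hα : α ∈ Set.Ioc (0 : ℝ) 1) :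
    ∃ c : ℕ → ℝ, (∀ k, 0 ≤ c k) ∧ HasSum c 1 ∧
      ∀ z ∈ Set.Icc (0 : ℝ) 1,
        HasSum (fun k : ℕ => c k * z ^ k) (Real.exp (-lam * (1 - z) ^ α)) := by
  obtain ⟨hα0, hα1⟩ := hα
  obtain ⟨c, hc, hsum⟩ :
      HasNonnegPowerSeries fun z => exp (-lam) * exp (lam * (1 - (1 - z) ^ α)) :=
    (HasNonnegPowerSeries.const (exp_pos _).le).mul <|
      ((HasNonnegPowerSeries.const hlam.le).mul
        (hasNonnegPowerSeries_one_sub_one_sub_rpow hα0 hα1)).exp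
  have hP : ∀ z ∈ Set.Icc (0 : ℝ) 1,
      HasSum (fun k => c k * z ^ k) (Real.exp (-lam * (1 - z) ^ α)) := fun z hz => by
    convert hsum z hz using 1
    dsimp only
    rw [← Real.exp_add]
    ring_nf
  refine ⟨c, hc, ?_, hP⟩
  simpa [zero_rpow hα0.ne'] using hP 1 ⟨zero_le_one, le_rfl⟩
end

section
/- The distribution with p.g.f. P(z) = exp(-λ((1-z)/(1-(1-q)z))^p) has infinite mean when 0 < p < 1, i.e., lim_{z→1⁻} P'(z) = +∞. -/
/-! With u(z) = (1 - z)/(1 - (1 - q) z), which decreases to 0 as z → 1⁻, the chain rule gives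
P'(z) = u^(p-1) · e^(-λ u^p) λ p q / (1 - (1 - q) z)², where the second factor tends to λ p / q > 0
while u^(p-1) → ∞ because p < 1. -/

open Real Filter Topology

theorem hasDerivAt_one_sub_div_one_sub_mul {q z : ℝ} (hz : 1 - (1 - q) * z ≠ 0) :
    HasDerivAt (fun z => (1 - z) / (1 - (1 - q) * z)) (-q / (1 - (1 - q) * z) ^ 2) z := by
  have hnum : HasDerivAt (fun z : ℝ => 1 - z) (-1) z := (hasDerivAt_id z).const_sub 1
  have hden : HasDerivAt (fun z : ℝ => 1 - (1 - q) * z) (-(1 - q)) z := by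
    simpa using ((hasDerivAt_id z).const_mul (1 - q)).const_sub 1
  exact (hnum.div hden hz).congr_deriv (by ring)

theorem tendsto_one_sub_mul_nhdsLT_one (q : ℝ) :
    Tendsto (fun z : ℝ => 1 - (1 - q) * z) (𝓝[<] 1) (𝓝 q) :=
  tendsto_nhdsWithin_of_tendsto_nhds <| (by fun_prop : Continuous fun z : ℝ => 1 - (1 - q) * z)
    |>.tendsto' 1 q (by ring)

theorem tendsto_one_sub_div_one_sub_mul_nhdsGT_zero {q : ℝ} (hq : 0 < q) :
    Tendsto (fun z : ℝ => (1 - z) / (1 - (1 - q) * z)) (𝓝[<] 1) (𝓝[>] 0) := by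
  have hden := tendsto_one_sub_mul_nhdsLT_one q
  have hnum : Tendsto (fun z : ℝ => 1 - z) (𝓝[<] 1) (𝓝 0) :=
    tendsto_nhdsWithin_of_tendsto_nhds <| (by fun_prop : Continuous fun z : ℝ => 1 - z)
      |>.tendsto' 1 0 (sub_self 1)
  have hquot := hnum.div hden hq.ne'
  rw [zero_div] at hquot
  refine tendsto_nhdsWithin_iff.2 ⟨hquot, ?_⟩
  filter_upwards [self_mem_nhdsWithin, hden.eventually (eventually_gt_nhds hq)] with z hz hd
  exact div_pos (sub_pos.2 hz) hd

theorem deriv_exp_neg_mul_one_sub_div_one_sub_mul_rpow {lam p q z : ℝ} (hz : z ≠ 1)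
    (hd : 1 - (1 - q) * z ≠ 0) :
    deriv (fun z : ℝ => exp (-lam * ((1 - z) / (1 - (1 - q) * z)) ^ p)) z =
      ((1 - z) / (1 - (1 - q) * z)) ^ (p - 1) *
        (exp (-lam * ((1 - z) / (1 - (1 - q) * z)) ^ p) * (lam * p * q / (1 - (1 - q) * z) ^ 2)) := by
  have hu : (1 - z) / (1 - (1 - q) * z) ≠ 0 := div_ne_zero (sub_ne_zero.2 hz.symm) hd
  rw [((((hasDerivAt_one_sub_div_one_sub_mul hd).rpow_const (p := p) (Or.inl hu)).const_mul
    (-lam)).exp).deriv]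
  ring

theorem citation_pgf_infinite_mean (lam p q : ℝ) (hlam : 0 < lam)
    (hp : p ∈ Set.Ioo (0 : ℝ) 1) (hq : q ∈ Set.Ioc (0 : ℝ) 1) :
    Tendsto (deriv fun z : ℝ => Real.exp (-lam * ((1 - z) / (1 - (1 - q) * z)) ^ p))
      (nhdsWithin 1 (Set.Iio 1)) atTop := by
  obtain ⟨hp0, hp1⟩ := hp
  have hq0 := hq.1
  set u : ℝ → ℝ := fun z => (1 - z) / (1 - (1 - q) * z)
  have hu := tendsto_one_sub_div_one_sub_mul_nhdsGT_zero hq0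
  have hden := tendsto_one_sub_mul_nhdsLT_one q
  have hderiv : (fun z => u z ^ (p - 1) *
      (exp (-lam * u z ^ p) * (lam * p * q / (1 - (1 - q) * z) ^ 2))) =ᶠ[𝓝[<] 1]
      deriv fun z : ℝ => exp (-lam * u z ^ p) := by
    filter_upwards [self_mem_nhdsWithin, hden.eventually (eventually_gt_nhds hq0)] with z hz hd
    exact (deriv_exp_neg_mul_one_sub_div_one_sub_mul_rpow hz.ne hd.ne').symm
  have hup : Tendsto (fun z => u z ^ p) (𝓝[<] 1) (𝓝 0) := by
    have := (continuousAt_rpow_const 0 p (Or.inr hp0.le)).tendsto.comp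
      (tendsto_nhdsWithin_iff.1 hu).1
    rwa [zero_rpow hp0.ne'] at this
  have hfactor : Tendsto (fun z => exp (-lam * u z ^ p) * (lam * p * q / (1 - (1 - q) * z) ^ 2))
      (𝓝[<] 1) (𝓝 (exp (-lam * 0) * (lam * p * q / q ^ 2))) :=
    (hup.const_mul (-lam)).rexp.mul (tendsto_const_nhds.div (hden.pow 2) (pow_ne_zero 2 hq0.ne'))
  have hpow := (tendsto_rpow_neg_nhdsGT_zero (by linarith : p - 1 < 0)).comp hu
  exact (hpow.atTop_mul_pos (by positivity) hfactor).congr' hderiv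
end

section
/- For α = 1/m with m ∈ ℕ, h > 0, λ > 0, the Laplace transform L(s) = exp(-λ^α(1+tan(πα/2))((s+h)^α - h^α)) satisfies the casual stability equation L^n(-log g_n(s)) = L(s) for all s ≥ 0 and n ≥ 1, where g_n(s) = exp(h - ((1/n)(s+h)^α + ((n-1)/n)h^α)^{1/α}). -/
open Real

theorem tempered_stable_casual_stable (m : ℕ) (hm : 1 ≤ m) (h lam : ℝ)
    (hh : 0 < h) (hlam : 0 < lam) :
    ∀ n : ℕ, 1 ≤ n → ∀ s : ℝ, 0 ≤ s →
      (Real.exp (-(lam ^ ((m : ℝ)⁻¹)) * (1 + Real.tan (Real.pi * ((m : ℝ)⁻¹) / 2)) *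
          (((-Real.log (Real.exp (h -
              ((1 / n) * (s + h) ^ ((m : ℝ)⁻¹) + ((n : ℝ) - 1) / n * h ^ ((m : ℝ)⁻¹))
                ^ ((m : ℝ))))) + h) ^ ((m : ℝ)⁻¹) - h ^ ((m : ℝ)⁻¹)))) ^ n
        = Real.exp (-(lam ^ ((m : ℝ)⁻¹)) * (1 + Real.tan (Real.pi * ((m : ℝ)⁻¹) / 2)) *
            ((s + h) ^ ((m : ℝ)⁻¹) - h ^ ((m : ℝ)⁻¹))) := by
  intro n hn s hs
  have hm0 : (m : ℝ) ≠ 0 := by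
    exact_mod_cast Nat.one_le_iff_ne_zero.mp hm
  have hn0 : (n : ℝ) ≠ 0 := by
    exact_mod_cast Nat.one_le_iff_ne_zero.mp hn
  set X : ℝ := (1 / n) * (s + h) ^ ((m : ℝ)⁻¹) + ((n : ℝ) - 1) / n * h ^ ((m : ℝ)⁻¹) with hX
  have hXnn : 0 ≤ X := by
    have h1 : 0 ≤ (s + h) ^ ((m : ℝ)⁻¹) := Real.rpow_nonneg (by linarith) _
    have h2 : 0 ≤ h ^ ((m : ℝ)⁻¹) := Real.rpow_nonneg hh.le _
    have h3 : (0:ℝ) ≤ ((n : ℝ) - 1) / n := by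
      apply div_nonneg _ (Nat.cast_nonneg n)
      have : (1:ℝ) ≤ (n:ℝ) := by exact_mod_cast hn
      linarith
    positivity
  rw [Real.log_exp]
  have key : -(h - X ^ (m : ℝ)) + h = X ^ (m : ℝ) := by ring
  rw [key, Real.rpow_rpow_inv hXnn hm0, ← Real.exp_nat_mul]
  congr 1
  have : (n : ℝ) * X = (s + h) ^ ((m : ℝ)⁻¹) + ((n : ℝ) - 1) * h ^ ((m : ℝ)⁻¹) := by
    rw [hX]; field_simp
  linear_combination (-(lam ^ ((m : ℝ)⁻¹)) * (1 + Real.tan (Real.pi * ((m : ℝ)⁻¹) / 2))) * this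
end
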